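/- Fix a rectangle [a,b] × [c,d] ⊂ ℝ × (0,1). There exists Λ > 0 such that for all t in [a,b] and all H, H' in [c,d]: ∫_ℝ |e^{itξ}−1|²/|ξ|² · |(1/c_H)|ξ|^{1/2−H} − (1/c_{H'})|ξ|^{1/2−H'}|² dξ ≤ Λ·|H − H'|². -/

import Mathlib

open Real MeasureTheory

/-- The square of the fBm normalizing constant, extended by continuity at `x = 1/2`. -/
noncomputable def cSq (x : ℝ) : ℝ :=
  if x = 1/2 then 2 * Real.pi
  else 2 * Real.cos (Real.pi * x) * Real.Gamma (2 - 2*x) / (x * (1 - 2*x))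

/-- The fBm normalizing constant `c_H`. -/
noncomputable def cFn (x : ℝ) : ℝ := Real.sqrt (cSq x)

noncomputable def Ffun (x : ℝ) : ℝ :=
  2 * Real.sqrt Real.pi * Real.exp (-(Real.log 4) * x) * Real.Gamma (1 - x) /
    (x * Real.Gamma (1/2 + x))



lemma exp_neg_log4 (x : ℝ) : Real.exp (-(Real.log 4) * x) = ((2:ℝ) ^ (2*x))⁻¹ := by
  have h4 : Real.log 4 = 2 * Real.log 2 := by
    rw [show (4:ℝ) = 2^(2:ℕ) by norm_num, Real.log_pow]; push_cast; ring
  rw [Real.rpow_def_of_pos two_pos, ← Real.exp_neg, h4]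
  ring_nf

lemma cSq_eq {x : ℝ} (h0 : 0 < x) (h1 : x < 1) : cSq x = Ffun x := by
  have hsqpi : Real.sqrt Real.pi * Real.sqrt Real.pi = Real.pi :=
    Real.mul_self_sqrt Real.pi_pos.le
  have hG2 : 0 < Real.Gamma (1/2 + x) := Real.Gamma_pos_of_pos (by linarith)
  by_cases hx : x = 1/2
  · subst hx
    rw [cSq, if_pos rfl, Ffun, exp_neg_log4]
    rw [show (1:ℝ) - 1/2 = 1/2 by norm_num, Real.Gamma_one_half_eq,
      show (1:ℝ)/2 + 1/2 = 1 by norm_num, Real.Gamma_one,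
      show (2:ℝ) * (1/2) = 1 by norm_num, Real.rpow_one]
    field_simp
    nlinarith [hsqpi, Real.pi_pos]
  · have hcos : Real.cos (Real.pi * x) ≠ 0 := by
      intro h
      rcases Real.cos_eq_zero_iff.1 h with ⟨n, hn⟩
      have hpi := Real.pi_pos
      have hx' : x = (2 * (n:ℝ) + 1) / 2 := by
        field_simp at hn ⊢
        nlinarith [hn]
      have hn0 : (0:ℝ) < 2 * (n:ℝ) + 1 := by nlinarith [hx', h0]
      have hn2 : 2 * (n:ℝ) + 1 < 2 := by nlinarith [hx', h1]
      have h1n : (-1:ℝ) < (n:ℝ) := by linarith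
      have h2n : (n:ℝ) < 1 := by linarith
      have : n = 0 := by
        have a1 : (-1:ℤ) < n := by exact_mod_cast h1n
        have a2 : n < 1 := by exact_mod_cast h2n
        omega
      subst this
      simp at hx'
      exact hx (by linarith [hx'])
    have h12x : (1:ℝ) - 2*x ≠ 0 := by
      intro h; exact hx (by linarith)
    have href : Real.Gamma (1/2 + x) * Real.Gamma (1/2 - x) = Real.pi / Real.cos (Real.pi * x) := by
      have h := Real.Gamma_mul_Gamma_one_sub (1/2 + x)
      rw [show (1:ℝ) - (1/2 + x) = 1/2 - x by ring] at h
      rw [h]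
      congr 1
      rw [show Real.pi * (1/2 + x) = Real.pi / 2 + Real.pi * x by ring, Real.sin_add,
        Real.sin_pi_div_two, Real.cos_pi_div_two]
      ring
    have hdup : Real.Gamma (1/2 - x) * Real.Gamma (1 - x)
        = Real.Gamma (1 - 2*x) * (2:ℝ) ^ (2*x) * Real.sqrt Real.pi := by
      have h := Real.Gamma_mul_Gamma_add_half (1/2 - x)
      rw [show (1:ℝ)/2 - x + 1/2 = 1 - x by ring, show 2 * ((1:ℝ)/2 - x) = 1 - 2*x by ring] at h
      rw [show (1:ℝ) - (1 - 2*x) = 2*x by ring] at h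
      exact h
    have hGadd : Real.Gamma (2 - 2*x) = (1 - 2*x) * Real.Gamma (1 - 2*x) := by
      have h := Real.Gamma_add_one (s := 1 - 2*x) h12x
      rw [show (1:ℝ) - 2*x + 1 = 2 - 2*x by ring] at h
      exact h
    have hE : (0:ℝ) < (2:ℝ) ^ (2*x) := Real.rpow_pos_of_pos two_pos _
    have hG3 : Real.Gamma (1/2 - x) = Real.pi / (Real.cos (Real.pi * x) * Real.Gamma (1/2 + x)) := by
      field_simp at href ⊢
      nlinarith [href]
    have hG4 : Real.Gamma (1 - 2*x)
        = Real.pi * Real.Gamma (1 - x) /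
          (Real.cos (Real.pi * x) * Real.Gamma (1/2 + x) * ((2:ℝ) ^ (2*x)) * Real.sqrt Real.pi) := by
      rw [hG3] at hdup
      field_simp at hdup ⊢
      nlinarith [hdup]
    rw [cSq, if_neg hx, Ffun, exp_neg_log4, hGadd, hG4]
    have hsp : Real.sqrt Real.pi ≠ 0 := by positivity
    field_simp
    ring_nf
    rw [Real.sq_sqrt Real.pi_pos.le]
    ring



lemma Ffun_pos {x : ℝ} (h0 : 0 < x) (h1 : x < 1) : 0 < Ffun x := by
  apply div_pos
  · exact mul_pos (mul_pos (by positivity) (Real.exp_pos _)) (Real.Gamma_pos_of_pos (by linarith))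
  · exact mul_pos h0 (Real.Gamma_pos_of_pos (by linarith))

lemma contDiffAt_realGamma {x : ℝ} (hx : 0 < x) : ContDiffAt ℝ 1 Real.Gamma x := by
  have hopen : IsOpen {z : ℂ | 0 < z.re} := isOpen_lt continuous_const Complex.continuous_re
  have hmem : {z : ℂ | 0 < z.re} ∈ nhds (x:ℂ) := hopen.mem_nhds (by simpa using hx)
  have hd : DifferentiableOn ℂ Complex.Gamma {z : ℂ | 0 < z.re} := by
    intro z hz
    refine (Complex.differentiableAt_Gamma z fun m => ?_).differentiableWithinAt
    intro h
    rw [h] at hz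
    simp only [Set.mem_setOf_eq, Complex.neg_re, Complex.natCast_re] at hz
    have : (0:ℝ) ≤ (m:ℝ) := Nat.cast_nonneg m
    linarith
  have hA : AnalyticAt ℂ Complex.Gamma (x:ℂ) := hd.analyticAt hmem
  have hA2 : AnalyticAt ℝ (fun y : ℝ => (Complex.Gamma (Complex.ofRealCLM y)).re) x :=
    (Complex.reCLM.analyticAt _).comp ((hA.restrictScalars).comp (Complex.ofRealCLM.analyticAt x))
  have heq : Real.Gamma = fun y : ℝ => (Complex.Gamma (Complex.ofRealCLM y)).re := by
    funext y
    simp [Complex.Gamma_ofReal]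
  rw [heq]
  exact hA2.contDiffAt

noncomputable def hF (x : ℝ) : ℝ := (Real.sqrt (Ffun x))⁻¹

lemma contDiffAt_hF {x : ℝ} (h0 : 0 < x) (h1 : x < 1) : ContDiffAt ℝ 1 hF x := by
  have c1 : ContDiffAt ℝ 1 (fun y : ℝ => Real.Gamma (1 - y)) x := by
    have := (contDiffAt_realGamma (x := 1 - x) (by linarith)).comp x
      ((contDiffAt_const (c := (1:ℝ))).sub contDiffAt_id)
    exact this
  have c2 : ContDiffAt ℝ 1 (fun y : ℝ => Real.Gamma (1/2 + y)) x := by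
    have := (contDiffAt_realGamma (x := 1/2 + x) (by linarith)).comp x
      ((contDiffAt_const (c := (1:ℝ)/2)).add contDiffAt_id)
    exact this
  have c3 : ContDiffAt ℝ 1 (fun y : ℝ => Real.exp (-(Real.log 4) * y)) x := by
    have := (Real.contDiff_exp (n := 1)).contDiffAt.comp x
      ((contDiffAt_const (c := -(Real.log 4))).mul contDiffAt_id)
    exact this
  have cF : ContDiffAt ℝ 1 Ffun x := by
    have hden : x * Real.Gamma (1/2 + x) ≠ 0 :=
      (mul_pos h0 (Real.Gamma_pos_of_pos (by linarith))).ne'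
    exact (((contDiffAt_const (c := 2 * Real.sqrt Real.pi)).mul c3).mul c1).div
      (contDiffAt_id.mul c2) hden
  exact (cF.sqrt (Ffun_pos h0 h1).ne').inv
    (Real.sqrt_ne_zero'.mpr (Ffun_pos h0 h1))

lemma hF_pos {x : ℝ} (h0 : 0 < x) (h1 : x < 1) : 0 < hF x := by
  unfold hF
  have := Ffun_pos h0 h1; positivity

lemma hF_lipschitz {c d : ℝ} (hc : 0 < c) (hcd : c ≤ d) (hd : d < 1) :
    ∃ K : ℝ, 0 < K ∧ (∀ x ∈ Set.Icc c d, |hF x| ≤ K) ∧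
      (∀ x ∈ Set.Icc c d, ∀ y ∈ Set.Icc c d, |hF y - hF x| ≤ K * |y - x|) := by
  have hsub : Set.Icc c d ⊆ Set.Ioo (0:ℝ) 1 := fun x hx => ⟨lt_of_lt_of_le hc hx.1, lt_of_le_of_lt hx.2 hd⟩
  have hOpen : IsOpen (Set.Ioo (0:ℝ) 1) := isOpen_Ioo
  have hcd' : ContDiffOn ℝ 1 hF (Set.Ioo (0:ℝ) 1) := fun x hx =>
    (contDiffAt_hF hx.1 hx.2).contDiffWithinAt
  have hdiff : ∀ x ∈ Set.Icc c d, HasDerivWithinAt hF (deriv hF x) (Set.Icc c d) x := by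
    intro x hx
    have : DifferentiableAt ℝ hF x :=
      (contDiffAt_hF (hsub hx).1 (hsub hx).2).differentiableAt one_ne_zero
    exact this.hasDerivAt.hasDerivWithinAt
  have hcont : ContinuousOn (deriv hF) (Set.Icc c d) :=
    (hcd'.continuousOn_deriv_of_isOpen hOpen le_rfl).mono hsub
  obtain ⟨L, hL⟩ := (isCompact_Icc (a := c) (b := d)).exists_bound_of_continuousOn hcont
  obtain ⟨M, hM⟩ := (isCompact_Icc (a := c) (b := d)).exists_bound_of_continuousOn
    ((hcd'.continuousOn).mono hsub)
  refine ⟨|L| + |M| + 1, by positivity, ?_, ?_⟩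
  · intro x hx
    calc |hF x| = ‖hF x‖ := rfl
    _ ≤ M := hM x hx
    _ ≤ |L| + |M| + 1 := by
        have := abs_nonneg L; have := le_abs_self M; linarith
  · intro x hx y hy
    have key := Convex.norm_image_sub_le_of_norm_hasDerivWithin_le
      (f := hF) (f' := deriv hF) (s := Set.Icc c d) (C := |L| + |M| + 1)
      hdiff (fun z hz => by
        have := hL z hz
        have := le_abs_self L
        have := abs_nonneg M
        calc ‖deriv hF z‖ ≤ L := hL z hz
        _ ≤ |L| + |M| + 1 := by linarith [le_abs_self L, abs_nonneg M])
      (convex_Icc c d) hx hy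
    exact key

lemma rpow_le_sum {r lo hi e : ℝ} (hr : 0 < r) (he : e ∈ Set.Icc lo hi) :
    r ^ e ≤ r ^ lo + r ^ hi := by
  rcases le_total 1 r with h | h
  · have : r ^ e ≤ r ^ hi := Real.rpow_le_rpow_of_exponent_le h he.2
    have h2 : (0:ℝ) ≤ r ^ lo := (Real.rpow_pos_of_pos hr _).le
    linarith
  · have : r ^ e ≤ r ^ lo := Real.rpow_le_rpow_of_exponent_ge hr h he.1
    have h2 : (0:ℝ) ≤ r ^ hi := (Real.rpow_pos_of_pos hr _).le
    linarith

lemma abs_rpow_sub_rpow_le {r u v lo hi : ℝ} (hr : 0 < r)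
    (hu : u ∈ Set.Icc lo hi) (hv : v ∈ Set.Icc lo hi) :
    |r ^ u - r ^ v| ≤ (r ^ lo + r ^ hi) * |Real.log r| * |u - v| := by
  have key := Convex.norm_image_sub_le_of_norm_hasDerivWithin_le
    (f := fun e : ℝ => r ^ e) (f' := fun e : ℝ => r ^ e * Real.log r)
    (s := Set.Icc lo hi) (C := (r ^ lo + r ^ hi) * |Real.log r|)
    (fun e _ => ((Real.hasStrictDerivAt_const_rpow hr e).hasDerivAt).hasDerivWithinAt)
    (fun e he => by
      have h1 : |r ^ e * Real.log r| = r ^ e * |Real.log r| := by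
        rw [abs_mul, abs_of_nonneg (Real.rpow_pos_of_pos hr _).le]
      calc ‖r ^ e * Real.log r‖ = r ^ e * |Real.log r| := h1
      _ ≤ (r ^ lo + r ^ hi) * |Real.log r| :=
          mul_le_mul_of_nonneg_right (rpow_le_sum hr he) (abs_nonneg _))
    (convex_Icc lo hi) hv hu
  exact key

lemma one_add_abs_log_le_small {r ε : ℝ} (hr : 0 < r) (hr1 : r ≤ 1) (hε : 0 < ε) :
    1 + |Real.log r| ≤ (1 + 1/ε) * r ^ (-ε) := by
  have hlog : Real.log r ≤ 0 := Real.log_nonpos hr.le hr1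
  have habs : |Real.log r| = -Real.log r := abs_of_nonpos hlog
  have hp : (0:ℝ) < r ^ (-ε) := Real.rpow_pos_of_pos hr _
  have h2 : -ε * Real.log r ≤ r ^ (-ε) - 1 := by
    have := Real.log_le_sub_one_of_pos hp
    rwa [Real.log_rpow hr] at this
  have h3 : (1:ℝ) ≤ r ^ (-ε) :=
    Real.one_le_rpow_of_pos_of_le_one_of_nonpos hr hr1 (by linarith)
  have hinv : (0:ℝ) < 1/ε := one_div_pos.mpr hε
  have h4 : -Real.log r ≤ 1/ε * (r ^ (-ε) - 1) := by
    have h5 := mul_le_mul_of_nonneg_left h2 hinv.le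
    have hee : 1/ε * (-ε * Real.log r) = -Real.log r := by field_simp
    linarith [hee ▸ h5]
  rw [habs, show (1 + 1/ε) * r ^ (-ε) = r ^ (-ε) + 1/ε * r ^ (-ε) by ring]
  nlinarith

lemma one_add_abs_log_le_big {r ε : ℝ} (hr : 1 ≤ r) (hε : 0 < ε) :
    1 + |Real.log r| ≤ (1 + 1/ε) * r ^ ε := by
  have hr0 : (0:ℝ) < r := lt_of_lt_of_le one_pos hr
  have habs : |Real.log r| = Real.log r := abs_of_nonneg (Real.log_nonneg hr)
  have hp : (0:ℝ) < r ^ ε := Real.rpow_pos_of_pos hr0 _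
  have h2 : ε * Real.log r ≤ r ^ ε - 1 := by
    have := Real.log_le_sub_one_of_pos hp
    rwa [Real.log_rpow hr0] at this
  have h3 : (1:ℝ) ≤ r ^ ε := Real.one_le_rpow hr hε.le
  have hinv : (0:ℝ) < 1/ε := one_div_pos.mpr hε
  have h4 : Real.log r ≤ 1/ε * (r ^ ε - 1) := by
    have h5 := mul_le_mul_of_nonneg_left h2 hinv.le
    have hee : 1/ε * (ε * Real.log r) = Real.log r := by field_simp
    linarith [hee ▸ h5]
  rw [habs, show (1 + 1/ε) * r ^ ε = r ^ ε + 1/ε * r ^ ε by ring]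
  nlinarith

lemma norm_exp_I_mul_sub_one_sq (θ : ℝ) :
    ‖Complex.exp (Complex.I * θ) - 1‖^2 = 2 - 2 * Real.cos θ := by
  rw [mul_comm Complex.I (θ:ℂ), Complex.exp_mul_I]
  rw [show ‖Complex.cos θ + Complex.sin θ * Complex.I - 1‖^2
      = Complex.normSq (Complex.cos θ + Complex.sin θ * Complex.I - 1) by
    rw [← Complex.sq_norm]]
  rw [Complex.normSq_apply]
  simp [Complex.add_re, Complex.add_im, Complex.mul_re, Complex.mul_im,
    Complex.cos_ofReal_re, Complex.sin_ofReal_re, Complex.cos_ofReal_im, Complex.sin_ofReal_im]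
  nlinarith [Real.sin_sq_add_cos_sq θ]

lemma norm_exp_sq_le_sq (θ : ℝ) : ‖Complex.exp (Complex.I * θ) - 1‖^2 ≤ θ^2 := by
  rw [norm_exp_I_mul_sub_one_sq]
  nlinarith [Real.one_sub_sq_div_two_le_cos (x := θ)]

lemma norm_exp_sq_le_four (θ : ℝ) : ‖Complex.exp (Complex.I * θ) - 1‖^2 ≤ 4 := by
  rw [norm_exp_I_mul_sub_one_sq]
  nlinarith [Real.neg_one_le_cos θ]

noncomputable def gmaj (c d C0 C1 : ℝ) (x : ℝ) : ℝ :=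
  if |x| ≤ 1 then C0 * |x| ^ (-d) else C1 * |x| ^ (-1-c)

lemma gmaj_nonneg {c d C0 C1 : ℝ} (hC0 : 0 ≤ C0) (hC1 : 0 ≤ C1) (x : ℝ) :
    0 ≤ gmaj c d C0 C1 x := by
  unfold gmaj; split <;> positivity

lemma integrableOn_abs_rpow_neg_comp {e : ℝ} {s : Set ℝ}
    (h : IntegrableOn (fun x : ℝ => |x| ^ e) s) :
    IntegrableOn (fun x : ℝ => |x| ^ e) ((fun x : ℝ => -x) ⁻¹' s) := by
  have mp : MeasurePreserving (fun x : ℝ => -x) volume volume :=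
    Measure.measurePreserving_neg volume
  have me : MeasurableEmbedding (fun x : ℝ => -x) :=
    (Homeomorph.neg ℝ).measurableEmbedding
  have := (mp.integrableOn_comp_preimage me (f := fun x : ℝ => |x| ^ e) (s := s)).mpr h
  have heq : ((fun x : ℝ => |x| ^ e) ∘ fun x : ℝ => -x) = fun x : ℝ => |x| ^ e := by
    funext x; simp [abs_neg]
  rwa [heq] at this

lemma integrable_gmaj {c d : ℝ} (hc : 0 < c) (hd : d < 1) (C0 C1 : ℝ) :
    Integrable (gmaj c d C0 C1) := by
  have I1 : IntegrableOn (fun x : ℝ => |x| ^ (-d)) (Set.Ioc 0 1) := by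
    have h := intervalIntegral.intervalIntegrable_rpow' (a := 0) (b := 1) (r := -d) (by linarith)
    rw [intervalIntegrable_iff, Set.uIoc_of_le zero_le_one] at h
    exact h.congr_fun (fun x hx => by rw [abs_of_pos hx.1]) measurableSet_Ioc
  have I0 : IntegrableOn (fun x : ℝ => |x| ^ (-d)) {(0:ℝ)} := by
    have : volume ({(0:ℝ)}) = 0 := measure_singleton 0
    rw [IntegrableOn, Measure.restrict_eq_zero.mpr this]
    exact integrable_zero_measure
  have I2 : IntegrableOn (fun x : ℝ => |x| ^ (-d)) (Set.Ico (-1) 0) := by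
    have := integrableOn_abs_rpow_neg_comp I1
    have hpre : ((fun x : ℝ => -x) ⁻¹' Set.Ioc 0 1) = Set.Ico (-1) (0:ℝ) := by
      ext x
      simp only [Set.mem_preimage, Set.mem_Ioc, Set.mem_Ico]
      constructor <;> intro h <;> constructor <;> linarith [h.1, h.2]
    rwa [hpre] at this
  have IA : IntegrableOn (fun x : ℝ => |x| ^ (-d)) (Set.Icc (-1) 1) := by
    apply (I2.union (I0.union I1)).mono_set
    intro x hx
    rcases lt_trichotomy x 0 with h | h | h
    · exact Or.inl ⟨hx.1, h⟩
    · exact Or.inr (Or.inl (by simp [h]))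
    · exact Or.inr (Or.inr ⟨h, hx.2⟩)
  have IC : IntegrableOn (fun x : ℝ => |x| ^ (-1-c)) (Set.Ioi 1) := by
    have h := integrableOn_Ioi_rpow_of_lt (a := -1-c) (by linarith) (c := 1) one_pos
    exact h.congr_fun (fun x hx => by
      rw [abs_of_pos (lt_trans one_pos hx)]) measurableSet_Ioi
  have ID : IntegrableOn (fun x : ℝ => |x| ^ (-1-c)) (Set.Iio (-1)) := by
    have := integrableOn_abs_rpow_neg_comp IC
    have hpre : ((fun x : ℝ => -x) ⁻¹' Set.Ioi 1) = Set.Iio (-1 : ℝ) := by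
      ext x
      simp only [Set.mem_preimage, Set.mem_Ioi, Set.mem_Iio]
      constructor <;> intro h <;> linarith
    rwa [hpre] at this
  rw [← integrableOn_univ]
  have hsub : (Set.univ : Set ℝ) ⊆ Set.Icc (-1) 1 ∪ (Set.Iio (-1) ∪ Set.Ioi 1) := by
    intro x _
    rcases le_or_gt (|x|) 1 with h | h
    · exact Or.inl (abs_le.mp h)
    · rcases lt_or_ge x 0 with hx | hx
      · exact Or.inr (Or.inl (by rw [Set.mem_Iio]; rw [abs_of_neg hx] at h; linarith))
      · exact Or.inr (Or.inr (by rw [Set.mem_Ioi]; rw [abs_of_nonneg hx] at h; linarith))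
  apply IntegrableOn.mono_set ?_ hsub
  have hIcc : IntegrableOn (gmaj c d C0 C1) (Set.Icc (-1) 1) := by
    apply MeasureTheory.IntegrableOn.congr_fun (IA.const_mul C0) ?_ measurableSet_Icc
    intro x hx
    have : |x| ≤ 1 := abs_le.mpr hx
    simp [gmaj, this]
  have hIio : IntegrableOn (gmaj c d C0 C1) (Set.Iio (-1)) := by
    apply MeasureTheory.IntegrableOn.congr_fun (ID.const_mul C1) ?_ measurableSet_Iio
    intro x hx
    have h1 : ¬ (|x| ≤ 1) := by
      rw [Set.mem_Iio] at hx
      rw [not_le, abs_of_neg (by linarith)]; linarith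
    simp [gmaj, h1]
  have hIoi : IntegrableOn (gmaj c d C0 C1) (Set.Ioi 1) := by
    apply MeasureTheory.IntegrableOn.congr_fun (IC.const_mul C1) ?_ measurableSet_Ioi
    intro x hx
    have h1 : ¬ (|x| ≤ 1) := by
      rw [Set.mem_Ioi] at hx
      rw [not_le, abs_of_pos (by linarith)]; linarith
    simp [gmaj, h1]
  exact hIcc.union (hIio.union hIoi)

lemma rpow_sq {r : ℝ} (hr : 0 < r) (e : ℝ) : (r ^ e) ^ (2:ℕ) = r ^ (2*e) := by
  rw [pow_two, ← Real.rpow_add hr, two_mul]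

lemma diff_bound {c d K : ℝ}
    (hKb : ∀ x ∈ Set.Icc c d, |1 / cFn x| ≤ K)
    (hKl : ∀ x ∈ Set.Icc c d, ∀ y ∈ Set.Icc c d, |1 / cFn y - 1 / cFn x| ≤ K * |y - x|)
    {H H' r : ℝ} (hH : H ∈ Set.Icc c d) (hH' : H' ∈ Set.Icc c d) (hr : 0 < r) :
    |1 / cFn H * r ^ ((1:ℝ)/2 - H) - 1 / cFn H' * r ^ ((1:ℝ)/2 - H')|
      ≤ K * (1 + |Real.log r|) * (r ^ ((1:ℝ)/2 - c) + r ^ ((1:ℝ)/2 - d)) * |H - H'| := by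
  set p := r ^ ((1:ℝ)/2 - c) + r ^ ((1:ℝ)/2 - d) with hp
  have hp0 : 0 ≤ p := add_nonneg (Real.rpow_pos_of_pos hr _).le (Real.rpow_pos_of_pos hr _).le
  have hα : ((1:ℝ)/2 - H) ∈ Set.Icc ((1:ℝ)/2 - d) ((1:ℝ)/2 - c) :=
    ⟨by linarith [hH.2], by linarith [hH.1]⟩
  have hβ : ((1:ℝ)/2 - H') ∈ Set.Icc ((1:ℝ)/2 - d) ((1:ℝ)/2 - c) :=
    ⟨by linarith [hH'.2], by linarith [hH'.1]⟩
  have e1 : r ^ ((1:ℝ)/2 - H) ≤ p := by rw [hp, add_comm]; exact rpow_le_sum hr hα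
  have hK0 : 0 ≤ K := le_trans (abs_nonneg _) (hKb H hH)
  have habs1 : |1 / cFn H - 1 / cFn H'| ≤ K * |H - H'| := by
    have := hKl H' hH' H hH
    exact this
  have habs2 : |r ^ ((1:ℝ)/2 - H) - r ^ ((1:ℝ)/2 - H')|
      ≤ p * |Real.log r| * |H - H'| := by
    have h := abs_rpow_sub_rpow_le hr hα hβ
    rw [show ((1:ℝ)/2 - H) - ((1:ℝ)/2 - H') = -(H - H') by ring, abs_neg] at h
    rw [hp]
    rw [show r ^ ((1:ℝ)/2 - d) + r ^ ((1:ℝ)/2 - c)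
      = r ^ ((1:ℝ)/2 - c) + r ^ ((1:ℝ)/2 - d) by ring] at h
    exact h
  have hsplit : 1 / cFn H * r ^ ((1:ℝ)/2 - H) - 1 / cFn H' * r ^ ((1:ℝ)/2 - H')
      = (1 / cFn H - 1 / cFn H') * r ^ ((1:ℝ)/2 - H)
        + 1 / cFn H' * (r ^ ((1:ℝ)/2 - H) - r ^ ((1:ℝ)/2 - H')) := by ring
  rw [hsplit]
  have t1 : |(1 / cFn H - 1 / cFn H') * r ^ ((1:ℝ)/2 - H)| ≤ K * |H - H'| * p := by
    rw [abs_mul, abs_of_nonneg (Real.rpow_pos_of_pos hr _).le]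
    exact mul_le_mul habs1 e1 (Real.rpow_pos_of_pos hr _).le (by positivity)
  have t2 : |1 / cFn H' * (r ^ ((1:ℝ)/2 - H) - r ^ ((1:ℝ)/2 - H'))|
      ≤ K * (p * |Real.log r| * |H - H'|) := by
    rw [abs_mul]
    exact mul_le_mul (hKb H' hH') habs2 (abs_nonneg _) hK0
  calc |(1 / cFn H - 1 / cFn H') * r ^ ((1:ℝ)/2 - H)
        + 1 / cFn H' * (r ^ ((1:ℝ)/2 - H) - r ^ ((1:ℝ)/2 - H'))|
      ≤ |(1 / cFn H - 1 / cFn H') * r ^ ((1:ℝ)/2 - H)|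
        + |1 / cFn H' * (r ^ ((1:ℝ)/2 - H) - r ^ ((1:ℝ)/2 - H'))| := abs_add_le _ _
    _ ≤ K * |H - H'| * p + K * (p * |Real.log r| * |H - H'|) := add_le_add t1 t2
    _ = K * (1 + |Real.log r|) * p * |H - H'| := by ring
set_option maxHeartbeats 1000000 in
theorem stmt_8 (a b c d : ℝ) (hab : a ≤ b) (hc : 0 < c) (hcd : c ≤ d) (hd : d < 1) :
    ∃ Λ : ℝ, 0 < Λ ∧ ∀ t ∈ Set.Icc a b, ∀ H ∈ Set.Icc c d, ∀ H' ∈ Set.Icc c d,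
      ∫ ξ : ℝ, ‖Complex.exp (Complex.I * t * ξ) - 1‖^2 / ξ^2 *
          ((1 / cFn H) * (abs ξ) ^ ((1:ℝ)/2 - H)
            - (1 / cFn H') * (abs ξ) ^ ((1:ℝ)/2 - H'))^2
        ≤ Λ * |H - H'|^2 := by
  obtain ⟨K, hK0, hKb', hKl'⟩ := hF_lipschitz hc hcd hd
  have heq : ∀ x ∈ Set.Icc c d, 1 / cFn x = hF x := by
    intro x hx
    have h0 : 0 < x := lt_of_lt_of_le hc hx.1
    have h1 : x < 1 := lt_of_le_of_lt hx.2 hd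
    rw [cFn, cSq_eq h0 h1, hF, one_div]
  have hKb : ∀ x ∈ Set.Icc c d, |1 / cFn x| ≤ K := by
    intro x hx; rw [heq x hx]; exact hKb' x hx
  have hKl : ∀ x ∈ Set.Icc c d, ∀ y ∈ Set.Icc c d,
      |1 / cFn y - 1 / cFn x| ≤ K * |y - x| := by
    intro x hx y hy; rw [heq x hx, heq y hy]; exact hKl' x hx y hy
  set T : ℝ := 1 + |a| + |b| with hTdef
  have hT0 : 0 < T := by positivity
  have hd1 : (0:ℝ) < 1 - d := by linarith
  set C0 : ℝ := 4 * T^2 * (1 + 2/(1-d))^2 with hC0def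
  set C1 : ℝ := 16 * (1 + 2/c)^2 with hC1def
  have hC0 : 0 ≤ C0 := by rw [hC0def]; positivity
  have hC1 : 0 ≤ C1 := by rw [hC1def]; positivity
  have hgint := integrable_gmaj hc hd C0 C1
  have hgnn : 0 ≤ ∫ ξ : ℝ, gmaj c d C0 C1 ξ :=
    integral_nonneg (fun x => gmaj_nonneg hC0 hC1 x)
  refine ⟨K^2 * (∫ ξ : ℝ, gmaj c d C0 C1 ξ) + 1, by positivity, ?_⟩
  intro t ht H hH H' hH'
  set Δ := |H - H'| with hΔdef
  have hΔ0 : 0 ≤ Δ := abs_nonneg _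
  have habsT : |t| ≤ T := by
    rw [abs_le]
    constructor
    · have := neg_abs_le a; have := abs_nonneg b; linarith [ht.1]
    · have := le_abs_self b; have := abs_nonneg a; linarith [ht.2]
  -- pointwise bound
  have hptwise : ∀ ξ : ℝ,
      ‖Complex.exp (Complex.I * t * ξ) - 1‖^2 / ξ^2 *
          ((1 / cFn H) * (abs ξ) ^ ((1:ℝ)/2 - H)
            - (1 / cFn H') * (abs ξ) ^ ((1:ℝ)/2 - H'))^2
        ≤ K^2 * Δ^2 * gmaj c d C0 C1 ξ := by
    intro ξ
    by_cases hξ : ξ = 0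
    · subst hξ
      have hlhs : ‖Complex.exp (Complex.I * t * (0:ℝ)) - 1‖^2 / (0:ℝ)^2 *
          ((1 / cFn H) * (abs (0:ℝ)) ^ ((1:ℝ)/2 - H)
            - (1 / cFn H') * (abs (0:ℝ)) ^ ((1:ℝ)/2 - H'))^2 = 0 := by
        norm_num
      rw [hlhs]
      exact mul_nonneg (by positivity) (gmaj_nonneg hC0 hC1 0)
    · set r : ℝ := |ξ| with hrdef
      have hr0 : 0 < r := abs_pos.mpr hξ
      set p : ℝ := r ^ ((1:ℝ)/2 - c) + r ^ ((1:ℝ)/2 - d) with hpdef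
      have hp0 : (0:ℝ) ≤ p := by
        rw [hpdef]
        exact add_nonneg (Real.rpow_pos_of_pos hr0 _).le (Real.rpow_pos_of_pos hr0 _).le
      set Dv : ℝ := (1 / cFn H) * r ^ ((1:ℝ)/2 - H) - (1 / cFn H') * r ^ ((1:ℝ)/2 - H')
        with hDvdef
      have hK0' : 0 ≤ K := hK0.le
      have hD : |Dv| ≤ K * (1 + |Real.log r|) * p * Δ := by
        rw [hDvdef, hpdef, hΔdef]
        exact diff_bound hKb hKl hH hH' hr0
      have hD2 : Dv^2 ≤ K^2 * Δ^2 * ((1 + |Real.log r|)^2 * p^2) := by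
        have h1 : Dv^2 = |Dv|^2 := (sq_abs Dv).symm
        have h2 : |Dv|^2 ≤ (K * (1 + |Real.log r|) * p * Δ)^2 :=
          pow_le_pow_left₀ (abs_nonneg _) hD 2
        have h3 : (K * (1 + |Real.log r|) * p * Δ)^2
            = K^2 * Δ^2 * ((1 + |Real.log r|)^2 * p^2) := by ring
        rw [h1, ← h3]; exact h2
      have hrw : Complex.I * (t:ℂ) * (ξ:ℂ) = Complex.I * ((t*ξ : ℝ) : ℂ) := by
        push_cast; ring
      have hξ2 : (0:ℝ) < ξ^2 := by
        rcases (sq_nonneg ξ).lt_or_eq with h | h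
        · exact h
        · exact absurd (pow_eq_zero_iff (n := 2) (by norm_num) |>.mp h.symm) hξ
      rcases le_or_gt r 1 with hsmall | hbig
      · -- |ξ| ≤ 1
        have hgval : gmaj c d C0 C1 ξ = C0 * r ^ (-d) := by
          rw [gmaj, if_pos (by rw [← hrdef]; exact hsmall)]
        have hlog2 : (1 + |Real.log r|)^2 ≤ (1 + 2/(1-d))^2 * r ^ (-(1-d)) := by
          have h := one_add_abs_log_le_small hr0 hsmall (ε := (1-d)/2) (by linarith)
          have hsq := pow_le_pow_left₀ (by positivity) h 2
          calc (1 + |Real.log r|)^2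
              ≤ ((1 + 1/((1-d)/2)) * r ^ (-((1-d)/2)))^2 := hsq
            _ = (1 + 2/(1-d))^2 * (r ^ (-((1-d)/2)))^(2:ℕ) := by
                rw [mul_pow, one_div_div]
            _ = (1 + 2/(1-d))^2 * r ^ (-(1-d)) := by
                rw [rpow_sq hr0, show 2 * (-((1-d)/2)) = -(1-d) by ring]
        have hp2 : p^2 ≤ 4 * r ^ (1 - 2*d) := by
          have h1 : r ^ ((1:ℝ)/2 - c) ≤ r ^ ((1:ℝ)/2 - d) :=
            Real.rpow_le_rpow_of_exponent_ge hr0 hsmall (by linarith)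
          have h2 : p ≤ 2 * r ^ ((1:ℝ)/2 - d) := by rw [hpdef]; linarith
          calc p^2 ≤ (2 * r ^ ((1:ℝ)/2 - d))^2 := pow_le_pow_left₀ hp0 h2 2
            _ = 4 * (r ^ ((1:ℝ)/2 - d))^(2:ℕ) := by ring
            _ = 4 * r ^ (1 - 2*d) := by
                rw [rpow_sq hr0, show 2 * ((1:ℝ)/2 - d) = 1 - 2*d by ring]
        have hN : ‖Complex.exp (Complex.I * t * ξ) - 1‖^2 / ξ^2 ≤ T^2 := by
          rw [div_le_iff₀ hξ2]
          have h1 : ‖Complex.exp (Complex.I * t * ξ) - 1‖^2 ≤ (t*ξ)^2 := by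
            rw [hrw]; exact norm_exp_sq_le_sq (t*ξ)
          have ht2 : t^2 ≤ T^2 := by
            rw [← sq_abs t]
            exact pow_le_pow_left₀ (abs_nonneg t) habsT 2
          have h4 : t^2 * ξ^2 ≤ T^2 * ξ^2 := mul_le_mul_of_nonneg_right ht2 (sq_nonneg ξ)
          nlinarith [h1, h4]
        calc ‖Complex.exp (Complex.I * t * ξ) - 1‖^2 / ξ^2 * Dv^2
            ≤ T^2 * Dv^2 := mul_le_mul_of_nonneg_right hN (sq_nonneg _)
          _ ≤ T^2 * (K^2 * Δ^2 * ((1 + |Real.log r|)^2 * p^2)) :=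
              mul_le_mul_of_nonneg_left hD2 (by positivity)
          _ ≤ T^2 * (K^2 * Δ^2 * (((1 + 2/(1-d))^2 * r ^ (-(1-d))) * (4 * r ^ (1 - 2*d)))) := by
              have hmid : (1 + |Real.log r|)^2 * p^2
                  ≤ ((1 + 2/(1-d))^2 * r ^ (-(1-d))) * (4 * r ^ (1 - 2*d)) :=
                mul_le_mul hlog2 hp2 (sq_nonneg p) (by positivity)
              exact mul_le_mul_of_nonneg_left
                (mul_le_mul_of_nonneg_left hmid (by positivity)) (by positivity)
          _ = K^2 * Δ^2 * (C0 * r ^ (-d)) := by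
              have hrr : r ^ (-(1-d)) * r ^ (1 - 2*d) = r ^ (-d) := by
                rw [← Real.rpow_add hr0, show -(1-d) + (1 - 2*d) = -d by ring]
              rw [hC0def, ← hrr]; ring
          _ = K^2 * Δ^2 * gmaj c d C0 C1 ξ := by rw [hgval]
      · -- |ξ| > 1
        have hgval : gmaj c d C0 C1 ξ = C1 * r ^ (-1-c) := by
          rw [gmaj, if_neg (by rw [← hrdef]; exact not_le.mpr hbig)]
        have hlog2 : (1 + |Real.log r|)^2 ≤ (1 + 2/c)^2 * r ^ c := by
          have h := one_add_abs_log_le_big hbig.le (ε := c/2) (by linarith)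
          have hsq := pow_le_pow_left₀ (by positivity) h 2
          calc (1 + |Real.log r|)^2
              ≤ ((1 + 1/(c/2)) * r ^ (c/2))^2 := hsq
            _ = (1 + 2/c)^2 * (r ^ (c/2))^(2:ℕ) := by rw [mul_pow, one_div_div]
            _ = (1 + 2/c)^2 * r ^ c := by
                rw [rpow_sq hr0, show 2 * (c/2) = c by ring]
        have hp2 : p^2 ≤ 4 * r ^ (1 - 2*c) := by
          have h1 : r ^ ((1:ℝ)/2 - d) ≤ r ^ ((1:ℝ)/2 - c) :=
            Real.rpow_le_rpow_of_exponent_le hbig.le (by linarith)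
          have h2 : p ≤ 2 * r ^ ((1:ℝ)/2 - c) := by rw [hpdef]; linarith
          calc p^2 ≤ (2 * r ^ ((1:ℝ)/2 - c))^2 := pow_le_pow_left₀ hp0 h2 2
            _ = 4 * (r ^ ((1:ℝ)/2 - c))^(2:ℕ) := by ring
            _ = 4 * r ^ (1 - 2*c) := by
                rw [rpow_sq hr0, show 2 * ((1:ℝ)/2 - c) = 1 - 2*c by ring]
        have hN : ‖Complex.exp (Complex.I * t * ξ) - 1‖^2 / ξ^2 ≤ 4 / r^2 := by
          have h1 : ‖Complex.exp (Complex.I * t * ξ) - 1‖^2 ≤ 4 := by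
            rw [hrw]; exact norm_exp_sq_le_four (t*ξ)
          rw [show ξ^2 = r^2 by rw [hrdef, sq_abs]]
          have h2 : (0:ℝ) < r^2 := by positivity
          rw [div_le_div_iff₀ h2 h2]
          exact mul_le_mul_of_nonneg_right h1 (sq_nonneg r)
        have hr2rpow : r^(2:ℕ) = r ^ ((2:ℕ):ℝ) := (Real.rpow_natCast r 2).symm
        calc ‖Complex.exp (Complex.I * t * ξ) - 1‖^2 / ξ^2 * Dv^2
            ≤ (4 / r^2) * Dv^2 := mul_le_mul_of_nonneg_right hN (sq_nonneg _)
          _ ≤ (4 / r^2) * (K^2 * Δ^2 * ((1 + |Real.log r|)^2 * p^2)) :=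
              mul_le_mul_of_nonneg_left hD2 (by positivity)
          _ ≤ (4 / r^2) * (K^2 * Δ^2 * (((1 + 2/c)^2 * r ^ c) * (4 * r ^ (1 - 2*c)))) := by
              have hmid : (1 + |Real.log r|)^2 * p^2
                  ≤ ((1 + 2/c)^2 * r ^ c) * (4 * r ^ (1 - 2*c)) :=
                mul_le_mul hlog2 hp2 (sq_nonneg p) (by positivity)
              exact mul_le_mul_of_nonneg_left
                (mul_le_mul_of_nonneg_left hmid (by positivity)) (by positivity)
          _ = K^2 * Δ^2 * (C1 * r ^ (-1-c)) := by
              have hrr : r ^ (c:ℝ) * r ^ (1 - 2*c) = r ^ (1 - c) := by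
                rw [← Real.rpow_add hr0, show (c:ℝ) + (1 - 2*c) = 1 - c by ring]
              have hrr2 : r ^ (1 - c) / r^(2:ℕ) = r ^ (-1-c) := by
                rw [hr2rpow, ← Real.rpow_sub hr0,
                  show (1 - c) - ((2:ℕ):ℝ) = -1-c by push_cast; ring]
              rw [hC1def, ← hrr2, ← hrr]
              field_simp
              ring
          _ = K^2 * Δ^2 * gmaj c d C0 C1 ξ := by rw [hgval]
  have hnn : ∀ ξ : ℝ,
      0 ≤ ‖Complex.exp (Complex.I * t * ξ) - 1‖^2 / ξ^2 *
          ((1 / cFn H) * (abs ξ) ^ ((1:ℝ)/2 - H)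
            - (1 / cFn H') * (abs ξ) ^ ((1:ℝ)/2 - H'))^2 := by
    intro ξ; positivity
  calc (∫ ξ : ℝ, ‖Complex.exp (Complex.I * t * ξ) - 1‖^2 / ξ^2 *
          ((1 / cFn H) * (abs ξ) ^ ((1:ℝ)/2 - H)
            - (1 / cFn H') * (abs ξ) ^ ((1:ℝ)/2 - H'))^2)
      ≤ ∫ ξ : ℝ, K^2 * Δ^2 * gmaj c d C0 C1 ξ :=
        integral_mono_of_nonneg (Filter.Eventually.of_forall hnn)
          ((hgint.const_mul _)) (Filter.Eventually.of_forall hptwise)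
    _ = K^2 * Δ^2 * ∫ ξ : ℝ, gmaj c d C0 C1 ξ := integral_const_mul _ _
    _ ≤ (K^2 * (∫ ξ : ℝ, gmaj c d C0 C1 ξ) + 1) * |H - H'|^2 := by
        rw [hΔdef]
        nlinarith [sq_nonneg (|H - H'|), hgnn, sq_nonneg K]
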